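/- arXiv:gr-qc/0506039 — 2 statements merged into one kernel-verified Lean document; each statement's English description precedes it below -/
import Mathlib

section
/- Let ℓ ≥ 1 be a natural number and let c = (ℓ+1, ℓ+1, ℓ+1) be the centre point of the lattice cube L_ℓ. For every point j = (j₁, j₂, j₃) ∈ L_ℓ there exists a bijection f : L_ℓ → L_ℓ such that f(j) = c and, for every x ∈ L_ℓ, |f(x) − c| ≤ |x − j| (Euclidean distances). -/
/-!
Identify `[1, 2ℓ+1]` with `ℤ/(2ℓ+1)` and, in each coordinate separately, rotate this cycle so that
`jᵢ` goes to the centre `ℓ+1`. The rotation sends `x` to `ℓ + 1 + r`, where `r` is the balanced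
residue of `x - j` modulo `2ℓ+1`; since `|r| ≤ |x - j|`, every coordinate difference to the centre
is at most the corresponding coordinate difference to `j`, and so is the Euclidean distance.
-/

open Finset

/-- The point of `ℝ³` (with the Euclidean metric) corresponding to an integer triple. -/
noncomputable def pt (i : ℤ × ℤ × ℤ) : EuclideanSpace ℝ (Fin 3) :=
  (WithLp.equiv 2 (Fin 3 → ℝ)).symm ![(i.1 : ℝ), (i.2.1 : ℝ), (i.2.2 : ℝ)]

/-- The lattice cube `L_ℓ`: integer triples `(i₁,i₂,i₃)` with `1 ≤ i₁,i₂,i₃ ≤ 2ℓ+1`. -/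
noncomputable def latticeCube (ℓ : ℕ) : Finset (ℤ × ℤ × ℤ) :=
  Finset.Icc 1 (2 * (ℓ : ℤ) + 1) ×ˢ Finset.Icc 1 (2 * (ℓ : ℤ) + 1) ×ˢ
    Finset.Icc 1 (2 * (ℓ : ℤ) + 1)

theorem Int.abs_bmod_le_abs (x : ℤ) (m : ℕ) : |x.bmod m| ≤ |x| := by
  rcases Nat.eq_zero_or_pos m with rfl | hm
  · rw [Int.bmod_zero]
  have hle := Int.bmod_le (x := x) hm
  have hge := Int.le_bmod (x := x) hm
  by_cases hx : -((m : ℤ) / 2) ≤ x ∧ x < ((m : ℤ) + 1) / 2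
  · rw [Int.bmod_eq_of_le hx.1 hx.2]
  -- outside the window where `bmod` is the identity, `|x|` already exceeds `m / 2 ≥ |x.bmod m|`
  · rcases abs_cases x with ⟨hx', _⟩ | ⟨hx', _⟩ <;> rw [hx', abs_le] <;> omega

section Recentre

variable (ℓ : ℕ)

def recentre (j x : ℤ) : ℤ := (x - j).bmod (2 * ℓ + 1) + (ℓ + 1)

theorem recentre_self (j : ℤ) : recentre ℓ j j = ℓ + 1 := by
  simp [recentre]

theorem abs_recentre_sub_le (j x : ℤ) : |recentre ℓ j x - (ℓ + 1)| ≤ |x - j| := by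
  simpa [recentre] using Int.abs_bmod_le_abs (x - j) (2 * ℓ + 1)

theorem recentre_mem_Icc (j x : ℤ) : recentre ℓ j x ∈ Set.Icc 1 (2 * (ℓ : ℤ) + 1) := by
  have hle := Int.bmod_le (x := x - j) (m := 2 * ℓ + 1) (by omega)
  have hge := Int.le_bmod (x := x - j) (m := 2 * ℓ + 1) (by omega)
  push_cast at hle hge
  constructor <;> simp only [recentre] <;> omega

theorem recentre_injOn (j : ℤ) : Set.InjOn (recentre ℓ j) (Set.Icc 1 (2 * (ℓ : ℤ) + 1)) := by
  intro x hx y hy hxy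
  have hdvd : ((2 * ℓ + 1 : ℕ) : ℤ) ∣ x - y := by
    have := dvd_sub (Int.dvd_bmod_sub_self (x := y - j) (m := 2 * ℓ + 1))
      (Int.dvd_bmod_sub_self (x := x - j) (m := 2 * ℓ + 1))
    simp only [recentre, add_left_inj] at hxy
    rwa [hxy, sub_sub_sub_cancel_left, sub_sub_sub_cancel_right] at this
  have hlt : |x - y| < ((2 * ℓ + 1 : ℕ) : ℤ) := by
    obtain ⟨hx1, hx2⟩ := hx
    obtain ⟨hy1, hy2⟩ := hy
    push_cast
    rw [abs_lt]
    constructor <;> omega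
  exact sub_eq_zero.mp (Int.eq_zero_of_abs_lt_dvd hdvd hlt)

theorem recentre_bijOn (j : ℤ) :
    Set.BijOn (recentre ℓ j) (Set.Icc 1 (2 * (ℓ : ℤ) + 1)) (Set.Icc 1 (2 * (ℓ : ℤ) + 1)) :=
  (Set.finite_Icc _ _).injOn_iff_bijOn_of_mapsTo (fun x _ ↦ recentre_mem_Icc ℓ j x)
    |>.mp (recentre_injOn ℓ j)

end Recentre

theorem coe_latticeCube (ℓ : ℕ) :
    (latticeCube ℓ : Set (ℤ × ℤ × ℤ)) =
      Set.Icc 1 (2 * (ℓ : ℤ) + 1) ×ˢ Set.Icc 1 (2 * (ℓ : ℤ) + 1) ×ˢ Set.Icc 1 (2 * (ℓ : ℤ) + 1) := by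
  simp only [latticeCube, coe_product, coe_Icc]

theorem dist_pt (a b : ℤ × ℤ × ℤ) :
    dist (pt a) (pt b) =
      √(((a.1 - b.1 : ℤ) : ℝ) ^ 2 + ((a.2.1 - b.2.1 : ℤ) : ℝ) ^ 2 + ((a.2.2 - b.2.2 : ℤ) : ℝ) ^ 2) := by
  rw [EuclideanSpace.dist_eq, Fin.sum_univ_three]
  simp [pt, Real.dist_eq, sq_abs]

theorem dist_pt_le_of_abs_sub_le {a b a' b' : ℤ × ℤ × ℤ} (h₁ : |a.1 - b.1| ≤ |a'.1 - b'.1|)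
    (h₂ : |a.2.1 - b.2.1| ≤ |a'.2.1 - b'.2.1|) (h₃ : |a.2.2 - b.2.2| ≤ |a'.2.2 - b'.2.2|) :
    dist (pt a) (pt b) ≤ dist (pt a') (pt b') := by
  rw [dist_pt, dist_pt]
  refine Real.sqrt_le_sqrt (add_le_add (add_le_add ?_ ?_) ?_) <;>
    rw [sq_le_sq, ← Int.cast_abs, ← Int.cast_abs] <;> exact_mod_cast ‹_›

theorem exists_bijection_decreasing_distances_general (ℓ : ℕ)
    (c : ℤ × ℤ × ℤ) (hc : c = ((ℓ : ℤ) + 1, (ℓ : ℤ) + 1, (ℓ : ℤ) + 1))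
    (j : ℤ × ℤ × ℤ) :
    ∃ f : ℤ × ℤ × ℤ → ℤ × ℤ × ℤ,
      Set.BijOn f (latticeCube ℓ : Set (ℤ × ℤ × ℤ)) (latticeCube ℓ : Set (ℤ × ℤ × ℤ)) ∧
      f j = c ∧
      ∀ x ∈ latticeCube ℓ, dist (pt (f x)) (pt c) ≤ dist (pt x) (pt j) := by
  subst hc
  refine ⟨fun x ↦ (recentre ℓ j.1 x.1, recentre ℓ j.2.1 x.2.1, recentre ℓ j.2.2 x.2.2), ?_, ?_, ?_⟩
  · rw [coe_latticeCube]
    exact (recentre_bijOn ℓ _).prodMap ((recentre_bijOn ℓ _).prodMap (recentre_bijOn ℓ _))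
  · simp only [recentre_self]
  · intro x _
    exact dist_pt_le_of_abs_sub_le (abs_recentre_sub_le ℓ _ _) (abs_recentre_sub_le ℓ _ _)
      (abs_recentre_sub_le ℓ _ _)

theorem exists_bijection_decreasing_distances (ℓ : ℕ) (hℓ : 1 ≤ ℓ)
    (c : ℤ × ℤ × ℤ) (hc : c = ((ℓ : ℤ) + 1, (ℓ : ℤ) + 1, (ℓ : ℤ) + 1))
    (j : ℤ × ℤ × ℤ) (hj : j ∈ latticeCube ℓ) :
    ∃ f : ℤ × ℤ × ℤ → ℤ × ℤ × ℤ,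
      Set.BijOn f (latticeCube ℓ : Set (ℤ × ℤ × ℤ)) (latticeCube ℓ : Set (ℤ × ℤ × ℤ)) ∧
      f j = c ∧
      ∀ x ∈ latticeCube ℓ, dist (pt (f x)) (pt c) ≤ dist (pt x) (pt j) :=
  exists_bijection_decreasing_distances_general ℓ c hc j
end

section
/- Let ℓ ≥ 1 be a natural number, let n = (2ℓ+1)³, let c = (ℓ+1, ℓ+1, ℓ+1) be the centre point of the lattice cube L_ℓ, and let Q(ℓ) = (∏_{{x,y}} |x − y|)^{2/n²}, where the product runs over all unordered pairs of distinct points of L_ℓ. Then Q(ℓ) ≥ (∏_{x ∈ L_ℓ, x ≠ c} |c − x|)^{1/n}. -/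
open Finset

/-- The product of the Euclidean distances `|x − y|` over all unordered pairs `{x, y}` of
distinct points of the lattice cube `L_ℓ`. -/
noncomputable def pairProd (ℓ : ℕ) : ℝ :=
  ∏ p ∈ (latticeCube ℓ).sym2.filter (fun p => ¬ p.IsDiag),
    Sym2.lift ⟨fun x y => dist (pt x) (pt y), fun _ _ => dist_comm _ _⟩ p

/-- `Q(ℓ)`: the `2/n²`-th power of the product of distances over all unordered pairs of
distinct points of `L_ℓ`, where `n = (2ℓ+1)³`. -/
noncomputable def Q (ℓ : ℕ) : ℝ :=
  pairProd ℓ ^ ((2 : ℝ) / (((2 * ℓ + 1) ^ 3 : ℕ) : ℝ) ^ 2)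

/-!
Squaring the product over unordered pairs counts every ordered pair once, so the square of the
pair product is `∏ₓ P x`, where `P x = ∏_{y ≠ x} |x - y|`; it is therefore at least `P(c) ^ n` as
soon as the centre minimizes `P` on the cube. For `x ∈ L_ℓ`, shifting every coordinate cyclically
on `{1, …, 2ℓ+1}` by the corresponding coordinate of `x - c` is a permutation of `L_ℓ` sending `c`
to `x`, and it does not shrink any coordinate difference to the base point: an unwrapped
coordinate keeps its difference, a wrapped one lands at distance `≥ ℓ + 1` from `xᵢ`, while
`|yᵢ - cᵢ| ≤ ℓ`.
-/

namespace Finset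

variable {α M : Type*} [DecidableEq α] [CommMonoid M]

theorem prod_sym2_filter_not_isDiag_sq (s : Finset α) (g : Sym2 α → M) :
    (∏ p ∈ s.sym2 with ¬ p.IsDiag, g p) ^ 2 = ∏ z ∈ s.offDiag, g s(z.1, z.2) := by
  rw [sym2_eq_image, Sym2.filter_image_mk_not_isDiag, ← prod_pow]
  refine prod_image' _ fun z hz => ?_
  have hfiber : {w ∈ s.offDiag | Sym2.mk.uncurry w = Sym2.mk.uncurry z} = {z, z.swap} := by
    ext w
    simp only [mem_filter, mem_offDiag, mem_insert, mem_singleton]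
    aesop
  have hswap : z ≠ z.swap := fun h => (mem_offDiag.1 hz).2.2 (congrArg Prod.fst h)
  rw [hfiber, prod_pair hswap, sq]
  exact congrArg (g s(z.1, z.2) * g ·) Sym2.eq_swap

theorem prod_offDiag (s : Finset α) (f : α → α → M) :
    ∏ z ∈ s.offDiag, f z.1 z.2 = ∏ x ∈ s, ∏ y ∈ s.erase x, f x y := by
  have : s.offDiag = {z ∈ s ×ˢ s | z.1 ≠ z.2} := by ext; simp [and_assoc]
  rw [this, prod_filter, prod_product]
  refine prod_congr rfl fun x _ => ?_
  rw [← filter_ne, prod_filter]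

theorem prod_erase_comp_of_injOn {s : Finset α} {φ : α → α} (hmaps : Set.MapsTo φ s s) (hinj : Set.InjOn φ s) {a : α}
    (ha : a ∈ s) (f : α → M) :
    ∏ y ∈ s.erase a, f (φ y) = ∏ z ∈ s.erase (φ a), f z := by
  have himage : s.image φ = s :=
    eq_of_subset_of_card_le (image_subset_iff.2 hmaps) (card_image_of_injOn hinj).ge
  have herase : s.erase (φ a) = (s.erase a).image φ := by
    refine eq_of_subset_of_card_le ?_ ?_
    · simpa only [himage] using erase_image_subset_image_erase φ s a
    · rw [card_erase_of_mem (hmaps ha), ← card_erase_of_mem ha]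
      exact card_image_le
  rw [herase, prod_image (hinj.mono (erase_subset a s))]

end Finset

/-- The cyclic shift by `d` of `{1, …, m}` (for `|d| < m`), written with `if` rather than `%` so
that `omega` can reason about it. -/
def cyclicShift (m d t : ℤ) : ℤ :=
  if m < t + d then t + d - m else if t + d < 1 then t + d + m else t + d

lemma cyclicShift_mem_Icc {m d t : ℤ} (hd : |d| < m) (ht : t ∈ Icc 1 m) :
    cyclicShift m d t ∈ Icc 1 m := by
  rw [mem_Icc, abs_eq_max_neg] at *
  unfold cyclicShift
  split_ifs <;> omega

lemma cyclicShift_injOn (m d : ℤ) : Set.InjOn (cyclicShift m d) (Icc 1 m) := by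
  intro s hs t ht h
  simp only [coe_Icc, Set.mem_Icc] at hs ht
  unfold cyclicShift at h
  split_ifs at h <;> omega

lemma cyclicShift_centre {ℓ u : ℤ} (hu : u ∈ Icc 1 (2 * ℓ + 1)) :
    cyclicShift (2 * ℓ + 1) (u - (ℓ + 1)) (ℓ + 1) = u := by
  rw [mem_Icc] at hu
  unfold cyclicShift
  split_ifs <;> omega

lemma abs_centre_sub_le_abs_sub_cyclicShift {ℓ u t : ℤ} (ht : t ∈ Icc 1 (2 * ℓ + 1)) :
    |ℓ + 1 - t| ≤ |u - cyclicShift (2 * ℓ + 1) (u - (ℓ + 1)) t| := by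
  rw [mem_Icc] at ht
  unfold cyclicShift
  simp only [abs_eq_max_neg]
  split_ifs <;> omega

lemma dist_pt_s10 (x y : ℤ × ℤ × ℤ) : dist (pt x) (pt y) =
    √(((x.1 - y.1 : ℤ) : ℝ) ^ 2 + ((x.2.1 - y.2.1 : ℤ) : ℝ) ^ 2 + ((x.2.2 - y.2.2 : ℤ) : ℝ) ^ 2) := by
  simp [EuclideanSpace.dist_eq, Fin.sum_univ_three, pt, Real.dist_eq, sq_abs]

lemma dist_pt_le_dist_pt {x y x' y' : ℤ × ℤ × ℤ} (h₁ : |x.1 - y.1| ≤ |x'.1 - y'.1|)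
    (h₂ : |x.2.1 - y.2.1| ≤ |x'.2.1 - y'.2.1|) (h₃ : |x.2.2 - y.2.2| ≤ |x'.2.2 - y'.2.2|) :
    dist (pt x) (pt y) ≤ dist (pt x') (pt y') := by
  have cast_sq_le {a b : ℤ} (h : |a| ≤ |b|) : (a : ℝ) ^ 2 ≤ (b : ℝ) ^ 2 :=
    sq_le_sq.2 (by exact_mod_cast h)
  rw [dist_pt_s10, dist_pt_s10]
  gcongr √(?_ + ?_ + ?_) <;> exact cast_sq_le ‹_›

lemma mem_latticeCube {ℓ : ℕ} {x : ℤ × ℤ × ℤ} : x ∈ latticeCube ℓ ↔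
    x.1 ∈ Icc 1 (2 * (ℓ : ℤ) + 1) ∧ x.2.1 ∈ Icc 1 (2 * (ℓ : ℤ) + 1) ∧
      x.2.2 ∈ Icc 1 (2 * (ℓ : ℤ) + 1) := by
  simp only [latticeCube, mem_product]

lemma card_latticeCube (ℓ : ℕ) : #(latticeCube ℓ) = (2 * ℓ + 1) ^ 3 := by
  have : (2 * (ℓ : ℤ) + 1 + 1 - 1).toNat = 2 * ℓ + 1 := by omega
  simp only [latticeCube, card_product, Int.card_Icc, this]
  ring

def cubeCentre (ℓ : ℕ) : ℤ × ℤ × ℤ := ((ℓ : ℤ) + 1, (ℓ : ℤ) + 1, (ℓ : ℤ) + 1)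

def cubeShift (ℓ : ℕ) (x y : ℤ × ℤ × ℤ) : ℤ × ℤ × ℤ :=
  (cyclicShift (2 * ℓ + 1) (x.1 - (ℓ + 1)) y.1,
    cyclicShift (2 * ℓ + 1) (x.2.1 - (ℓ + 1)) y.2.1,
    cyclicShift (2 * ℓ + 1) (x.2.2 - (ℓ + 1)) y.2.2)

lemma cubeCentre_mem_latticeCube {ℓ : ℕ} : cubeCentre ℓ ∈ latticeCube ℓ := by
  simp only [mem_latticeCube, cubeCentre, mem_Icc]
  omega

section cubeShift

variable {ℓ : ℕ} {x : ℤ × ℤ × ℤ}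

lemma cubeShift_cubeCentre (hx : x ∈ latticeCube ℓ) : cubeShift ℓ x (cubeCentre ℓ) = x := by
  obtain ⟨h₁, h₂, h₃⟩ := mem_latticeCube.1 hx
  simp only [cubeShift, cubeCentre, cyclicShift_centre h₁, cyclicShift_centre h₂,
    cyclicShift_centre h₃]

lemma mapsTo_cubeShift (hx : x ∈ latticeCube ℓ) :
    Set.MapsTo (cubeShift ℓ x) (latticeCube ℓ) (latticeCube ℓ) := by
  intro y hy
  obtain ⟨hx₁, hx₂, hx₃⟩ := mem_latticeCube.1 hx
  obtain ⟨hy₁, hy₂, hy₃⟩ := mem_latticeCube.1 hy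
  have hshift {u : ℤ} (hu : u ∈ Icc 1 (2 * (ℓ : ℤ) + 1)) : |u - (ℓ + 1)| < 2 * ℓ + 1 := by
    rw [mem_Icc] at hu
    rw [abs_lt]
    omega
  exact mem_latticeCube.2 ⟨cyclicShift_mem_Icc (hshift hx₁) hy₁,
    cyclicShift_mem_Icc (hshift hx₂) hy₂, cyclicShift_mem_Icc (hshift hx₃) hy₃⟩

lemma injOn_cubeShift : Set.InjOn (cubeShift ℓ x) (latticeCube ℓ) := by
  intro y hy z hz h
  obtain ⟨hy₁, hy₂, hy₃⟩ := mem_latticeCube.1 hy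
  obtain ⟨hz₁, hz₂, hz₃⟩ := mem_latticeCube.1 hz
  simp only [cubeShift, Prod.mk.injEq] at h
  exact Prod.ext (cyclicShift_injOn _ _ hy₁ hz₁ h.1)
    (Prod.ext (cyclicShift_injOn _ _ hy₂ hz₂ h.2.1) (cyclicShift_injOn _ _ hy₃ hz₃ h.2.2))

lemma dist_cubeCentre_le_dist_cubeShift {y : ℤ × ℤ × ℤ} (hy : y ∈ latticeCube ℓ) :
    dist (pt (cubeCentre ℓ)) (pt y) ≤ dist (pt x) (pt (cubeShift ℓ x y)) := by
  obtain ⟨hy₁, hy₂, hy₃⟩ := mem_latticeCube.1 hy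
  exact dist_pt_le_dist_pt (abs_centre_sub_le_abs_sub_cyclicShift hy₁)
    (abs_centre_sub_le_abs_sub_cyclicShift hy₂) (abs_centre_sub_le_abs_sub_cyclicShift hy₃)

end cubeShift

theorem prod_dist_cubeCentre_le {ℓ : ℕ} {x : ℤ × ℤ × ℤ} (hx : x ∈ latticeCube ℓ) :
    ∏ y ∈ (latticeCube ℓ).erase (cubeCentre ℓ), dist (pt (cubeCentre ℓ)) (pt y) ≤
      ∏ y ∈ (latticeCube ℓ).erase x, dist (pt x) (pt y) :=
  calc ∏ y ∈ (latticeCube ℓ).erase (cubeCentre ℓ), dist (pt (cubeCentre ℓ)) (pt y)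
      ≤ ∏ y ∈ (latticeCube ℓ).erase (cubeCentre ℓ), dist (pt x) (pt (cubeShift ℓ x y)) :=
        prod_le_prod (fun _ _ => dist_nonneg)
          fun _ hy => dist_cubeCentre_le_dist_cubeShift (mem_of_mem_erase hy)
    _ = ∏ y ∈ (latticeCube ℓ).erase x, dist (pt x) (pt y) := by
        rw [prod_erase_comp_of_injOn (mapsTo_cubeShift hx) injOn_cubeShift
          cubeCentre_mem_latticeCube (dist (pt x) <| pt ·), cubeShift_cubeCentre hx]

lemma pairProd_sq (ℓ : ℕ) :
    pairProd ℓ ^ 2 = ∏ x ∈ latticeCube ℓ, ∏ y ∈ (latticeCube ℓ).erase x, dist (pt x) (pt y) := by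
  rw [pairProd, prod_sym2_filter_not_isDiag_sq, ← prod_offDiag]
  rfl

lemma pairProd_nonneg (ℓ : ℕ) : 0 ≤ pairProd ℓ :=
  prod_nonneg fun p _ => p.ind fun _ _ => (Sym2.lift_mk _ _ _).symm ▸ dist_nonneg

lemma Real.rpow_one_div_le_rpow_two_div_sq {a b : ℝ} {n : ℕ} (ha : 0 ≤ a) (hb : 0 ≤ b)
    (h : a ^ n ≤ b ^ 2) : a ^ (1 / n : ℝ) ≤ b ^ (2 / (n : ℝ) ^ 2) := by
  calc a ^ (1 / n : ℝ) = (a ^ n) ^ (1 / (n : ℝ) ^ 2) := by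
        rw [← Real.rpow_natCast, ← Real.rpow_mul ha, mul_one_div, sq, div_self_mul_self',
          one_div]
    _ ≤ (b ^ 2) ^ (1 / (n : ℝ) ^ 2) := by gcongr
    _ = b ^ (2 / (n : ℝ) ^ 2) := by
        rw [← Real.rpow_natCast, ← Real.rpow_mul hb, Nat.cast_ofNat, mul_one_div]

theorem Q_ge_centre_product_rpow_general (ℓ : ℕ)
    (c : ℤ × ℤ × ℤ) (hc : c = ((ℓ : ℤ) + 1, (ℓ : ℤ) + 1, (ℓ : ℤ) + 1)) :
    Q ℓ ≥ (∏ x ∈ (latticeCube ℓ).erase c, dist (pt c) (pt x)) ^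
      ((1 : ℝ) / (((2 * ℓ + 1) ^ 3 : ℕ) : ℝ)) := by
  subst hc
  have hcentre : (∏ x ∈ (latticeCube ℓ).erase (cubeCentre ℓ), dist (pt (cubeCentre ℓ)) (pt x))
      ^ #(latticeCube ℓ) ≤ pairProd ℓ ^ 2 := by
    rw [pairProd_sq, ← prod_const]
    exact prod_le_prod (fun _ _ => prod_nonneg fun _ _ => dist_nonneg)
      fun _ hx => prod_dist_cubeCentre_le hx
  rw [card_latticeCube] at hcentre
  exact Real.rpow_one_div_le_rpow_two_div_sq (prod_nonneg fun _ _ => dist_nonneg)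
    (pairProd_nonneg ℓ) hcentre

theorem Q_ge_centre_product_rpow (ℓ : ℕ) (hℓ : 1 ≤ ℓ)
    (c : ℤ × ℤ × ℤ) (hc : c = ((ℓ : ℤ) + 1, (ℓ : ℤ) + 1, (ℓ : ℤ) + 1)) :
    Q ℓ ≥ (∏ x ∈ (latticeCube ℓ).erase c, dist (pt c) (pt x)) ^
      ((1 : ℝ) / (((2 * ℓ + 1) ^ 3 : ℕ) : ℝ)) :=
  Q_ge_centre_product_rpow_general ℓ c hc
end
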